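/- Let f : EuclideanSpace ℝ (Fin n) → ℝ be twice continuously differentiable on an open set Ω, and let γ be a twice differentiable curve mapping an interval containing 0 into Ω such that f(γ(t)) is constant, with p = γ(0), ∇f(p) ≠ 0, ‖γ'(0)‖ = 1, and γ''(0) = κ · N(p) for some real number κ, where N(p) = ∇f(p)/‖∇f(p)‖. Then κ = −Q(p)(γ'(0), γ'(0)) / ‖∇f(p)‖, where Q(p) is the Hessian bilinear form of f at p. -/

import Mathlib

open Set

/-- The Hessian bilinear form of `f` at `p`, applied to `(v, w)`. -/
noncomputable def hessianForm {n : ℕ} (f : EuclideanSpace ℝ (Fin n) → ℝ)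
    (p v w : EuclideanSpace ℝ (Fin n)) : ℝ :=
  fderiv ℝ (fderiv ℝ f) p v w

/-- The unit normal `N(p) = ∇f(p)/‖∇f(p)‖`. -/
noncomputable def unitNormal {n : ℕ} (f : EuclideanSpace ℝ (Fin n) → ℝ)
    (p : EuclideanSpace ℝ (Fin n)) : EuclideanSpace ℝ (Fin n) :=
  ‖gradient f p‖⁻¹ • gradient f p

/-!
Differentiating `f (γ t) = c` once gives `Df(γ t) (γ' t) = 0` on the whole interval; differentiating
once more at `0` gives `Q(p)(γ' 0, γ' 0) + Df(p)(γ'' 0) = 0`. Since `γ'' 0 = κ N(p)` and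
`Df(p) N(p) = ⟪∇f(p), N(p)⟫ = ‖∇f(p)‖`, this is `Q(p)(γ' 0, γ' 0) + κ ‖∇f(p)‖ = 0`.
-/

section LevelCurve

variable {E F : Type*} [NormedAddCommGroup E] [NormedSpace ℝ E]
  [NormedAddCommGroup F] [NormedSpace ℝ F]

theorem HasDerivAt.eq_zero_of_forall_mem_Icc_eq {g : ℝ → F} {g' c : F} {a b t : ℝ}
    (hab : a < b) (ht : t ∈ Icc a b) (hg : HasDerivAt g g' t) (hc : ∀ s ∈ Icc a b, g s = c) :
    g' = 0 :=
  (uniqueDiffOn_Icc hab t ht).eq_deriv _ hg.hasDerivWithinAt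
    ((hasDerivWithinAt_const t (Icc a b) c).congr hc (hc t ht))

theorem hasDerivAt_fderiv_comp_apply {f : E → F} {γ γ' : ℝ → E} {v w : E} {t : ℝ}
    (hf : DifferentiableAt ℝ (fderiv ℝ f) (γ t)) (hγ : HasDerivAt γ v t)
    (hγ' : HasDerivAt γ' w t) :
    HasDerivAt (fun s ↦ fderiv ℝ f (γ s) (γ' s))
      (fderiv ℝ (fderiv ℝ f) (γ t) v (γ' t) + fderiv ℝ f (γ t) w) t :=
  (hf.hasFDerivAt.comp_hasDerivAt t hγ).clm_apply hγ'

theorem fderiv_fderiv_apply_add_fderiv_apply_eq_zero {f : E → F} {γ γ' γ'' : ℝ → E}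
    {a b t₀ : ℝ} {c : F} (hab : a < b) (ht₀ : t₀ ∈ Icc a b)
    (hf : ∀ t ∈ Icc a b, ContDiffAt ℝ 2 f (γ t))
    (hγ' : ∀ t ∈ Icc a b, HasDerivAt γ (γ' t) t)
    (hγ'' : ∀ t ∈ Icc a b, HasDerivAt γ' (γ'' t) t)
    (hconst : ∀ t ∈ Icc a b, f (γ t) = c) :
    fderiv ℝ (fderiv ℝ f) (γ t₀) (γ' t₀) (γ' t₀) + fderiv ℝ f (γ t₀) (γ'' t₀) = 0 := by
  have hfirst : ∀ t ∈ Icc a b, fderiv ℝ f (γ t) (γ' t) = 0 := fun t ht ↦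
    (((hf t ht).differentiableAt two_ne_zero).hasFDerivAt.comp_hasDerivAt t
      (hγ' t ht)).eq_zero_of_forall_mem_Icc_eq hab ht hconst
  have hf₂ : DifferentiableAt ℝ (fderiv ℝ f) (γ t₀) :=
    ((hf t₀ ht₀).fderiv_right (m := 1) le_rfl).differentiableAt one_ne_zero
  exact (hasDerivAt_fderiv_comp_apply hf₂ (hγ' t₀ ht₀)
    (hγ'' t₀ ht₀)).eq_zero_of_forall_mem_Icc_eq hab ht₀ hfirst

end LevelCurve

theorem fderiv_apply_unitNormal {n : ℕ} (f : EuclideanSpace ℝ (Fin n) → ℝ)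
    (p : EuclideanSpace ℝ (Fin n)) : fderiv ℝ f p (unitNormal f p) = ‖gradient f p‖ := by
  rw [← inner_gradient_left, unitNormal, real_inner_smul_right, real_inner_self_eq_norm_sq]
  by_cases h : ‖gradient f p‖ = 0
  · simp [h]
  · field_simp

theorem signed_curvature_of_normal_section_general
    (n : ℕ) (f : EuclideanSpace ℝ (Fin n) → ℝ)
    (Ω : Set (EuclideanSpace ℝ (Fin n))) (hΩ : IsOpen Ω)
    (hf : ContDiffOn ℝ 2 f Ω)
    (γ γ' γ'' : ℝ → EuclideanSpace ℝ (Fin n))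
    (a b : ℝ) (hab : a < b) (h0 : (0 : ℝ) ∈ Icc a b)
    (hmap : ∀ t ∈ Icc a b, γ t ∈ Ω)
    (hγ' : ∀ t ∈ Icc a b, HasDerivAt γ (γ' t) t)
    (hγ'' : ∀ t ∈ Icc a b, HasDerivAt γ' (γ'' t) t)
    (c : ℝ) (hconst : ∀ t ∈ Icc a b, f (γ t) = c)
    (hgrad : gradient f (γ 0) ≠ 0)
    (κ : ℝ) (hκ : γ'' 0 = κ • unitNormal f (γ 0)) :
    κ = -hessianForm f (γ 0) (γ' 0) (γ' 0) / ‖gradient f (γ 0)‖ := by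
  have hf₂ : ∀ t ∈ Icc a b, ContDiffAt ℝ 2 f (γ t) := fun t ht ↦
    hf.contDiffAt (hΩ.mem_nhds (hmap t ht))
  have hkey := fderiv_fderiv_apply_add_fderiv_apply_eq_zero hab h0 hf₂ hγ' hγ'' hconst
  rw [hκ, map_smul, fderiv_apply_unitNormal, smul_eq_mul] at hkey
  have hnorm : ‖gradient f (γ 0)‖ ≠ 0 := norm_ne_zero_iff.mpr hgrad
  rw [hessianForm, eq_div_iff hnorm]
  linarith

theorem signed_curvature_of_normal_section
    (n : ℕ) (f : EuclideanSpace ℝ (Fin n) → ℝ)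
    (Ω : Set (EuclideanSpace ℝ (Fin n))) (hΩ : IsOpen Ω)
    (hf : ContDiffOn ℝ 2 f Ω)
    (γ γ' γ'' : ℝ → EuclideanSpace ℝ (Fin n))
    (a b : ℝ) (hab : a < b) (h0 : (0 : ℝ) ∈ Icc a b)
    (hmap : ∀ t ∈ Icc a b, γ t ∈ Ω)
    (hγ' : ∀ t ∈ Icc a b, HasDerivAt γ (γ' t) t)
    (hγ'' : ∀ t ∈ Icc a b, HasDerivAt γ' (γ'' t) t)
    (c : ℝ) (hconst : ∀ t ∈ Icc a b, f (γ t) = c)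
    (hgrad : gradient f (γ 0) ≠ 0)
    (hunit : ‖γ' 0‖ = 1)
    (κ : ℝ) (hκ : γ'' 0 = κ • unitNormal f (γ 0)) :
    κ = -hessianForm f (γ 0) (γ' 0) (γ' 0) / ‖gradient f (γ 0)‖ :=
  signed_curvature_of_normal_section_general n f Ω hΩ hf γ γ' γ'' a b hab h0 hmap hγ' hγ'' c hconst
    hgrad κ hκ
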